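/- Under the hypotheses of the Lyapunov drift bound, if at every slot t the controls satisfy y_n(t) - ∑_k x_{k,n}(t) ≤ -δ, x_{n,k}(t) - d_{n,k}(t) ≤ -δ, α_{n,k}(t)d_{n,k}(t) - e_{n,k}(t) ≤ -δ, and e_{n,k}(t) - h_{n,k}(t) ≤ -δ for some δ > 0 (in the weighted sense: the total drift cross-term is at most -2δ times the total queue backlog), then limsup_{T→∞} (1/T) ∑_{t=0}^{T-1} [∑_n S_n(t) + ∑_{n,k}(U_{n,k}(t) + Q_{n,k}(t) + Z_{n,k}(t))] ≤ B/(2δ), i.e., the time-average total queue backlog is bounded. -/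

import Mathlib

/-!
Summing the drift inequality `L (t + 1) - L t ≤ B - c * g t` over `t < T` telescopes to
`c * ∑_{t<T} g t ≤ T * B + L 0 - L T ≤ T * B + L 0`, since the Lyapunov function `L` is
nonnegative. Dividing by `c * T`, the time average of the backlog `g` is at most
`B / c + L 0 / (c * T)`, whose limit is `B / c`.
-/

open Filter Finset

section Drift

variable {L g : ℕ → ℝ} {B c : ℝ}

theorem mul_sum_range_le_of_drift (hL : ∀ t, 0 ≤ L t)
    (hdrift : ∀ t, L (t + 1) - L t ≤ B - c * g t) (T : ℕ) :
    c * ∑ t ∈ range T, g t ≤ T * B + L 0 := by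
  have hsum : L T - L 0 ≤ T * B - c * ∑ t ∈ range T, g t := by
    calc L T - L 0 = ∑ t ∈ range T, (L (t + 1) - L t) := (sum_range_sub L T).symm
      _ ≤ ∑ t ∈ range T, (B - c * g t) := sum_le_sum fun t _ => hdrift t
      _ = T * B - c * ∑ t ∈ range T, g t := by
        rw [sum_sub_distrib, sum_const, card_range, nsmul_eq_mul, mul_sum]
  linarith [hL T]

theorem sum_range_div_le_of_drift (hc : 0 < c) (hL : ∀ t, 0 ≤ L t)
    (hdrift : ∀ t, L (t + 1) - L t ≤ B - c * g t) {T : ℕ} (hT : 0 < T) :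
    (∑ t ∈ range T, g t) / T ≤ B / c + L 0 / c / T := by
  have hT' : (0 : ℝ) < T := Nat.cast_pos.mpr hT
  rw [div_le_iff₀ hT', add_mul, div_mul_cancel₀ _ hT'.ne', div_mul_eq_mul_div,
    ← add_div, le_div_iff₀ hc, mul_comm]
  linarith [mul_sum_range_le_of_drift hL hdrift T]

theorem limsup_sum_range_div_le_of_drift (hc : 0 < c) (hL : ∀ t, 0 ≤ L t)
    (hg : ∀ t, 0 ≤ g t) (hdrift : ∀ t, L (t + 1) - L t ≤ B - c * g t) :
    limsup (fun T : ℕ => (∑ t ∈ range T, g t) / T) atTop ≤ B / c := by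
  have hbound : Tendsto (fun T : ℕ => B / c + L 0 / c / T) atTop (nhds (B / c)) := by
    simpa using (tendsto_const_div_atTop_nhds_zero_nat (L 0 / c)).const_add (B / c)
  have hcobdd : IsCoboundedUnder (· ≤ ·) atTop fun T : ℕ => (∑ t ∈ range T, g t) / T :=
    isCoboundedUnder_le_of_le atTop fun T =>
      div_nonneg (sum_nonneg fun t _ => hg t) T.cast_nonneg
  calc limsup (fun T : ℕ => (∑ t ∈ range T, g t) / T) atTop
      ≤ limsup (fun T : ℕ => B / c + L 0 / c / T) atTop :=
        limsup_le_limsup ((eventually_gt_atTop 0).mono fun T hT =>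
          sum_range_div_le_of_drift hc hL hdrift hT) hcobdd hbound.isBoundedUnder_le
    _ = B / c := hbound.limsup_eq

end Drift

theorem stmt10_general (N : ℕ)
    (S : ℕ → Fin N → ℝ) (U Q Z : ℕ → Fin N → Fin N → ℝ)
    (B δ : ℝ) (hδ : 0 < δ)
    (hSnn : ∀ t n, 0 ≤ S t n) (hUnn : ∀ t n k, 0 ≤ U t n k)
    (hQnn : ∀ t n k, 0 ≤ Q t n k) (hZnn : ∀ t n k, 0 ≤ Z t n k)
    -- drift bound with per-slot negative drift proportional to the backlog
    -- (the weighted sense: cross terms are at most -2δ times the total backlog)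
    (hdrift : ∀ t : ℕ,
      (∑ n, S (t + 1) n ^ 2 + ∑ n, ∑ k, (U (t + 1) n k ^ 2 + Q (t + 1) n k ^ 2 +
          Z (t + 1) n k ^ 2)) -
        (∑ n, S t n ^ 2 + ∑ n, ∑ k, (U t n k ^ 2 + Q t n k ^ 2 + Z t n k ^ 2)) ≤
      B - 2 * δ * (∑ n, S t n + ∑ n, ∑ k, (U t n k + Q t n k + Z t n k))) :
    Filter.limsup
      (fun T : ℕ =>
        (∑ t ∈ Finset.range T,
          (∑ n, S t n + ∑ n, ∑ k, (U t n k + Q t n k + Z t n k))) / T)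
      Filter.atTop ≤ B / (2 * δ) := by
  refine limsup_sum_range_div_le_of_drift (L := fun t =>
      ∑ n, S t n ^ 2 + ∑ n, ∑ k, (U t n k ^ 2 + Q t n k ^ 2 + Z t n k ^ 2))
    (by positivity) (fun t => by positivity) (fun t => ?_) hdrift
  exact add_nonneg (sum_nonneg fun n _ => hSnn t n) <| sum_nonneg fun n _ =>
    sum_nonneg fun k _ => add_nonneg (add_nonneg (hUnn t n k) (hQnn t n k)) (hZnn t n k)

theorem stmt10 (N : ℕ)
    (S : ℕ → Fin N → ℝ) (U Q Z : ℕ → Fin N → Fin N → ℝ)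
    (B δ : ℝ) (hB : 0 ≤ B) (hδ : 0 < δ)
    (hSnn : ∀ t n, 0 ≤ S t n) (hUnn : ∀ t n k, 0 ≤ U t n k)
    (hQnn : ∀ t n k, 0 ≤ Q t n k) (hZnn : ∀ t n k, 0 ≤ Z t n k)
    -- drift bound with per-slot negative drift proportional to the backlog
    -- (the weighted sense: cross terms are at most -2δ times the total backlog)
    (hdrift : ∀ t : ℕ,
      (∑ n, S (t + 1) n ^ 2 + ∑ n, ∑ k, (U (t + 1) n k ^ 2 + Q (t + 1) n k ^ 2 +
          Z (t + 1) n k ^ 2)) -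
        (∑ n, S t n ^ 2 + ∑ n, ∑ k, (U t n k ^ 2 + Q t n k ^ 2 + Z t n k ^ 2)) ≤
      B - 2 * δ * (∑ n, S t n + ∑ n, ∑ k, (U t n k + Q t n k + Z t n k))) :
    Filter.limsup
      (fun T : ℕ =>
        (∑ t ∈ Finset.range T,
          (∑ n, S t n + ∑ n, ∑ k, (U t n k + Q t n k + Z t n k))) / T)
      Filter.atTop ≤ B / (2 * δ) :=
  stmt10_general N S U Q Z B δ hδ hSnn hUnn hQnn hZnn hdrift
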